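/- (Theorem 1, matrix form.) Let Y be an invertible symmetric real M×M matrix and D a diagonal positive-definite M×M matrix, and let Σ = Y⁻¹ D Y⁻¹ be the covariance matrix of ΔV = Y⁻¹ ΔI where ΔI ~ N(0, D). Fix i ≠ j and suppose bus i and bus j are not connected and have no common neighbor, i.e., Y_{ij} = 0 and there is no index k ∉ {i,j} with both Y_{ik} ≠ 0 and Y_{jk} ≠ 0. Then the (i,j) entry of the precision matrix Σ⁻¹ = Y D⁻¹ Y is zero, and consequently, writing I = {i,j} and J = {1,…,M}\{i,j}, the off-diagonal entry of the conditional covariance matrix Σ_{I|J} = Σ_{II} − Σ_{IJ} Σ_{JJ}⁻¹ Σ_{IJ}ᵀ is zero. -/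

import Mathlib

open Matrix

/-!
Since `Σ = Y⁻¹ D Y⁻¹`, its inverse is `Y D⁻¹ Y`, whose `(i, j)` entry is `∑ₖ Y i k (D k k)⁻¹ Y k j`;
every term vanishes because `i` and `j` are not adjacent and share no neighbour. By the block
inversion formula, the inverse of the Schur complement `Σ_{I|J}` is the `I × I` block of `Σ⁻¹`
(here `Σ_{JJ}` is invertible since `Σ` is positive definite). A `2 × 2` matrix with vanishing
`(0, 1)` entry has an inverse with vanishing `(0, 1)` entry, so `Σ_{I|J}` is diagonal.
-/

namespace Matrix

section

variable {l m n o R : Type*} [Fintype m] [Fintype n] [DecidableEq m] [DecidableEq n] [CommRing R]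

theorem mul_diagonal_mul_apply_eq_zero {A : Matrix l m R} {B : Matrix m o R} (d : m → R)
    {i : l} {j : o} (h : ∀ k, A i k = 0 ∨ B k j = 0) : (A * diagonal d * B) i j = 0 := by
  rw [mul_apply]
  refine Finset.sum_eq_zero fun k _ => ?_
  rcases h k with h | h <;> simp [h]

theorem inv_apply_zero_one_eq_zero_of_fin_two {A : Matrix (Fin 2) (Fin 2) R} (h : A 0 1 = 0) :
    A⁻¹ 0 1 = 0 := by
  simp [inv_def, adjugate_fin_two, h]

theorem sub_mul_inv_mul_eq_inv_toBlocks₁₁_inv (A : Matrix m m R) (B : Matrix m n R)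
    (C : Matrix n m R) (D : Matrix n n R) (hT : IsUnit (fromBlocks A B C D).det)
    (hD : IsUnit D.det) :
    A - B * D⁻¹ * C = ((fromBlocks A B C D)⁻¹).toBlocks₁₁⁻¹ := by
  let := (fromBlocks A B C D).invertibleOfIsUnitDet hT
  let := D.invertibleOfIsUnitDet hD
  let := invertibleOfFromBlocks₂₂Invertible A B C D
  rw [← invOf_eq_nonsing_inv D, ← invOf_eq_nonsing_inv (fromBlocks A B C D),
    invOf_fromBlocks₂₂_eq, toBlocks_fromBlocks₁₁, ← invOf_eq_nonsing_inv, invOf_invOf]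

end

open scoped ComplexOrder in
theorem PosDef.inv_mul_mul_inv {𝕜 n : Type*} [RCLike 𝕜] [Fintype n] [DecidableEq n]
    {Y D : Matrix n n 𝕜} (hY : IsUnit Y.det) (hYherm : Y.IsHermitian) (hD : D.PosDef) :
    (Y⁻¹ * D * Y⁻¹).PosDef := by
  have hinj : Function.Injective Y⁻¹.mulVec :=
    mulVec_injective_iff_isUnit.mpr ((isUnit_iff_isUnit_det _).mpr (isUnit_nonsing_inv_det _ hY))
  simpa [hYherm.inv.eq] using hD.conjTranspose_mul_mul_same hinj

end Matrix

def pairComplEquiv {ι : Type*} [DecidableEq ι] {i j : ι} (hij : i ≠ j) :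
    Fin 2 ⊕ {k : ι // k ≠ i ∧ k ≠ j} ≃ ι where
  toFun := Sum.elim ![i, j] Subtype.val
  invFun k :=
    if hi : k = i then Sum.inl 0
    else if hj : k = j then Sum.inl 1 else Sum.inr ⟨k, hi, hj⟩
  left_inv := by
    rintro (a | ⟨k, hki, hkj⟩)
    · fin_cases a <;> simp [hij.symm]
    · simp [hki, hkj]
  right_inv k := by
    by_cases hi : k = i
    · simp [hi]
    · by_cases hj : k = j <;> simp [hi, hj, hij.symm]

theorem eq_zero_or_eq_zero_of_no_common_neighbor {ι R : Type*} [Zero R] {Y : Matrix ι ι R}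
    (hYsymm : Y.IsSymm) {i j : ι} (hYij : Y i j = 0)
    (hnocommon : ∀ k, k ≠ i → k ≠ j → ¬(Y i k ≠ 0 ∧ Y j k ≠ 0)) (k : ι) :
    Y i k = 0 ∨ Y k j = 0 := by
  by_cases hki : k = i
  · exact .inr (hki ▸ hYij)
  by_cases hkj : k = j
  · exact .inl (hkj ▸ hYij)
  rw [← hYsymm.apply k j]
  by_contra! h
  exact hnocommon k hki hkj h

/-- **Theorem 1, matrix form.** Let `Y` be an invertible symmetric real
`M × M` matrix, `D` a diagonal positive-definite matrix, and `Σ' = Y⁻¹ D Y⁻¹` the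
covariance of `ΔV = Y⁻¹ ΔI` with `ΔI ~ N(0, D)`.  If `i ≠ j`, bus `i` and bus `j` are
not connected (`Y i j = 0`) and have no common neighbor, then the `(i,j)` entry of the
precision matrix `Σ'⁻¹ = Y D⁻¹ Y` is zero, and the off-diagonal entry of the
conditional covariance (Schur complement) for `I = {i,j}`, `J = complement`, is zero. -/
theorem line_outage_conditional_independence_matrix
    {M : ℕ} (Y D : Matrix (Fin M) (Fin M) ℝ)
    (hY : IsUnit Y.det) (hYsymm : Y.IsSymm)
    (hDdiag : D.IsDiag) (hDpos : D.PosDef)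
    (i j : Fin M) (hij : i ≠ j) (hYij : Y i j = 0)
    (hnocommon : ∀ k : Fin M, k ≠ i → k ≠ j → ¬(Y i k ≠ 0 ∧ Y j k ≠ 0)) :
    let S : Matrix (Fin M) (Fin M) ℝ := Y⁻¹ * D * Y⁻¹
    let e : Fin 2 → Fin M := ![i, j]
    let SII : Matrix (Fin 2) (Fin 2) ℝ := of fun a b => S (e a) (e b)
    let SIJ : Matrix (Fin 2) {k : Fin M // k ≠ i ∧ k ≠ j} ℝ := of fun a b => S (e a) b.val
    let SJJ : Matrix {k : Fin M // k ≠ i ∧ k ≠ j} {k : Fin M // k ≠ i ∧ k ≠ j} ℝ :=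
      of fun a b => S a.val b.val
    S⁻¹ = Y * D⁻¹ * Y ∧ S⁻¹ i j = 0 ∧ (SII - SIJ * SJJ⁻¹ * SIJᵀ) 0 1 = 0 := by
  intro S e SII SIJ SJJ
  have hSinv : S⁻¹ = Y * D⁻¹ * Y := by
    rw [Matrix.mul_inv_rev, Matrix.mul_inv_rev, nonsing_inv_nonsing_inv _ hY, Matrix.mul_assoc]
  have hSinv_ij : S⁻¹ i j = 0 := by
    rw [hSinv, ← hDdiag.diagonal_diag, inv_diagonal]
    exact mul_diagonal_mul_apply_eq_zero _
      (eq_zero_or_eq_zero_of_no_common_neighbor hYsymm hYij hnocommon)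
  have hSpos : S.PosDef := PosDef.inv_mul_mul_inv hY (isHermitian_iff_isSymm.mpr hYsymm) hDpos
  have hSJJ : IsUnit SJJ.det :=
    (isUnit_iff_isUnit_det _).mp (hSpos.submatrix Subtype.val_injective).isUnit
  have hblocks : S.submatrix (pairComplEquiv hij) (pairComplEquiv hij) =
      fromBlocks SII SIJ SIJᵀ SJJ := by
    ext (a | a) (b | b)
    · rfl
    · rfl
    · exact (isHermitian_iff_isSymm.mp hSpos.isHermitian).apply (e b) a.val
    · rfl
  have hT : IsUnit (fromBlocks SII SIJ SIJᵀ SJJ).det := by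
    rw [← hblocks, det_submatrix_equiv_self, ← isUnit_iff_isUnit_det]
    exact hSpos.isUnit
  refine ⟨hSinv, hSinv_ij, ?_⟩
  rw [sub_mul_inv_mul_eq_inv_toBlocks₁₁_inv _ _ _ _ hT hSJJ, ← hblocks, inv_submatrix_equiv]
  exact inv_apply_zero_one_eq_zero_of_fin_two hSinv_ij
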